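/- arXiv:2309.06072 — 4 statements merged into one kernel-verified Lean document; each statement's English description precedes it below -/
import Mathlib

section
/- Every graph in d-DIR (the intersection graph of a finite family of line segments in the plane using at most d distinct slopes) satisfies χ(G) ≤ d·ω(G). -/
/-- The slope of the segment with endpoints `P` and `Q` (`none` codes `∞`). -/
noncomputable def segSlope (P Q : ℝ × ℝ) : Option ℝ :=
  if P.1 = Q.1 then none else some ((Q.2 - P.2) / (Q.1 - P.1))

/-!
Colour a vertex by the pair (slope of its segment, colour inside its slope class); it remains to
colour each slope class with `ω(G)` colours. A linear automorphism of the plane makes all segments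
of one slope horizontal, so two of them meet iff they lie on the same line and their intervals on
that line overlap. Order the vertices by the left ends of these intervals: the earlier neighbours
of a segment inside its class all contain its left end, hence form a clique, and greedy colouring
in this order needs at most `ω(G)` colours.
-/

open scoped Interval

section Segments

open Set

theorem inf_mem_uIcc_of_inter_nonempty {α : Type*} [Lattice α] {a b a' b' : α}
    (h : ([[a, b]] ∩ [[a', b']]).Nonempty) (hle : a ⊓ b ≤ a' ⊓ b') : a' ⊓ b' ∈ [[a, b]] := by
  obtain ⟨x, hx, hx'⟩ := h
  exact ⟨hle, hx'.1.trans hx.2⟩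

theorem segment_mk_left_eq_image_uIcc (a b c : ℝ) :
    segment ℝ (a, c) (b, c) = (·, c) '' [[a, b]] := by
  rw [← segment_eq_uIcc, Prod.image_mk_segment_left]

theorem segment_inter_nonempty_iff_of_injective {E : Type*} [AddCommGroup E] [Module ℝ E]
    {f : E →ₗ[ℝ] ℝ × ℝ} (hf : Function.Injective f) {P Q P' Q' : E}
    (h : (f P).2 = (f Q).2) (h' : (f P').2 = (f Q').2) :
    (segment ℝ P Q ∩ segment ℝ P' Q').Nonempty ↔
      (f P).2 = (f P').2 ∧ ([[(f P).1, (f Q).1]] ∩ [[(f P').1, (f Q').1]]).Nonempty := by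
  have himage : ∀ A B : E, (f A).2 = (f B).2 →
      f '' segment ℝ A B = (·, (f A).2) '' [[(f A).1, (f B).1]] := by
    intro A B hAB
    calc f '' segment ℝ A B = segment ℝ (f A) (f B) := image_segment ℝ f.toAffineMap A B
      _ = segment ℝ ((f A).1, (f A).2) ((f B).1, (f A).2) := by
        rw [show ((f B).1, (f A).2) = f B from Prod.ext rfl hAB]
      _ = _ := segment_mk_left_eq_image_uIcc ..
  rw [← image_nonempty (f := f), image_inter hf, himage P Q h, himage P' Q' h']
  constructor
  · rintro ⟨_, ⟨x, hx, rfl⟩, ⟨x', hx', hxx'⟩⟩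
    obtain ⟨rfl, hc⟩ := Prod.ext_iff.mp hxx'
    exact ⟨hc.symm, x', hx, hx'⟩
  · rintro ⟨hc, x, hx, hx'⟩
    exact ⟨(x, (f P).2), ⟨x, hx, rfl⟩, ⟨x, hx', by rw [hc]⟩⟩

/-- Maps every segment of slope `σ` to a horizontal segment. -/
noncomputable def straighten : Option ℝ → ℝ × ℝ →ₗ[ℝ] ℝ × ℝ
  | none => (LinearEquiv.prodComm ℝ ℝ ℝ).toLinearMap
  | some m => (LinearMap.fst ℝ ℝ ℝ).prod (LinearMap.snd ℝ ℝ ℝ - m • LinearMap.fst ℝ ℝ ℝ)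

@[simp]
theorem straighten_none_apply (z : ℝ × ℝ) : straighten none z = z.swap := rfl

@[simp]
theorem straighten_some_apply (m : ℝ) (z : ℝ × ℝ) : straighten (some m) z = (z.1, z.2 - m * z.1) :=
  rfl

theorem straighten_injective : ∀ σ, Function.Injective (straighten σ)
  | none => Prod.swap_injective
  | some m => fun z w h => by
    obtain ⟨h₁, h₂⟩ := Prod.ext_iff.mp h
    simp only [straighten_some_apply] at h₁ h₂
    exact Prod.ext h₁ (by rw [h₁] at h₂; linarith)

theorem straighten_segSlope_snd (P Q : ℝ × ℝ) :
    (straighten (segSlope P Q) P).2 = (straighten (segSlope P Q) Q).2 := by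
  unfold segSlope
  split_ifs with h
  · simpa using h
  · simp only [straighten_some_apply]
    field_simp [sub_ne_zero.mpr (Ne.symm h)]
    ring

/-- `segOffset` identifies the line through a segment and `segInterval` the interval the segment
occupies on it, both read off after `straighten`. -/
noncomputable def segOffset (P Q : ℝ × ℝ) : ℝ :=
  (straighten (segSlope P Q) P).2

noncomputable def segInterval (P Q : ℝ × ℝ) : Set ℝ :=
  [[(straighten (segSlope P Q) P).1, (straighten (segSlope P Q) Q).1]]

noncomputable def segStart (P Q : ℝ × ℝ) : ℝ :=
  (straighten (segSlope P Q) P).1 ⊓ (straighten (segSlope P Q) Q).1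

theorem segment_inter_nonempty_iff_of_segSlope_eq {P Q P' Q' : ℝ × ℝ}
    (h : segSlope P Q = segSlope P' Q') :
    (segment ℝ P Q ∩ segment ℝ P' Q').Nonempty ↔
      segOffset P Q = segOffset P' Q' ∧ (segInterval P Q ∩ segInterval P' Q').Nonempty := by
  have hPQ := straighten_segSlope_snd P Q
  rw [h] at hPQ
  simp only [segOffset, segInterval, h]
  exact segment_inter_nonempty_iff_of_injective (straighten_injective _) hPQ
    (straighten_segSlope_snd P' Q')

theorem segOffset_eq_and_segStart_mem_segInterval {P Q P' Q' : ℝ × ℝ}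
    (h : segSlope P Q = segSlope P' Q')
    (hmeet : (segment ℝ P Q ∩ segment ℝ P' Q').Nonempty) (hle : segStart P Q ≤ segStart P' Q') :
    segOffset P Q = segOffset P' Q' ∧ segStart P' Q' ∈ segInterval P Q := by
  obtain ⟨hoff, hint⟩ := (segment_inter_nonempty_iff_of_segSlope_eq h).mp hmeet
  exact ⟨hoff, inf_mem_uIcc_of_inter_nonempty hint hle⟩

end Segments

namespace SimpleGraph

open Finset

variable {V : Type*} {G H : SimpleGraph V}

theorem cliqueNum_mono [Finite V] (h : G ≤ H) : G.cliqueNum ≤ H.cliqueNum := by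
  obtain ⟨s, hs⟩ := G.exists_isNClique_cliqueNum
  exact hs.card_eq ▸ IsClique.card_le_cliqueNum (tc := hs.isClique.mono h)

theorem exists_lt_cliqueNum_forall_adj_ne [Finite V] {s : Finset V} {a : V}
    (hs : G.IsClique {u | u ∈ s ∧ G.Adj u a}) (c : V → ℕ) :
    ∃ k < G.cliqueNum, ∀ u ∈ s, G.Adj u a → c u ≠ k := by
  classical
  set N := s.filter (G.Adj · a)
  have hclique : G.IsClique (insert a N : Finset V) := by
    rw [coe_insert, isClique_insert]
    refine ⟨hs.subset fun u hu => by simpa [N] using hu, fun u hu _ => ?_⟩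
    exact (mem_filter.mp hu).2.symm
  have hcard : #N < G.cliqueNum := by
    have ha : a ∉ N := fun ha => G.loopless.irrefl a (mem_filter.mp ha).2
    have h := IsClique.card_le_cliqueNum (t := insert a N) (tc := hclique)
    rw [card_insert_of_notMem ha] at h
    omega
  obtain ⟨k, hk, hkN⟩ := exists_mem_notMem_of_card_lt_card <|
    (card_image_le (s := N) (f := c)).trans_lt (hcard.trans_eq (card_range _).symm)
  exact ⟨k, mem_range.mp hk, fun u hu hua h =>
    hkN (mem_image.mpr ⟨u, mem_filter.mpr ⟨hu, hua⟩, h⟩)⟩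

theorem colorable_cliqueNum_of_forall_isClique_adj_le [Finite V] {α : Type*} [LinearOrder α]
    (key : V → α) (h : ∀ v, G.IsClique {u | key u ≤ key v ∧ G.Adj u v}) :
    G.Colorable G.cliqueNum := by
  classical
  have := Fintype.ofFinite V
  suffices ∀ s : Finset V, ∃ c : V → ℕ,
      (∀ v ∈ s, c v < G.cliqueNum) ∧ ∀ u ∈ s, ∀ v ∈ s, G.Adj u v → c u ≠ c v by
    obtain ⟨c, hlt, hc⟩ := this univ
    exact ⟨Coloring.mk (fun v => ⟨c v, hlt v (mem_univ v)⟩)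
      fun huv hcuv => hc _ (mem_univ _) _ (mem_univ _) huv (congrArg Fin.val hcuv)⟩
  intro s
  induction s using Finset.induction_on_max_value key with
  | empty => exact ⟨0, by simp, by simp⟩
  | insert a s ha hmax ih =>
    obtain ⟨c, hlt, hc⟩ := ih
    -- `a` comes last, so its neighbours in `s` form a clique and leave a colour `< ω` free
    have hlast : G.IsClique {u | u ∈ s ∧ G.Adj u a} :=
      (h a).subset fun u hu => by exact ⟨hmax u hu.1, hu.2⟩
    obtain ⟨k, hk, hkne⟩ := exists_lt_cliqueNum_forall_adj_ne hlast c
    refine ⟨Function.update c a k, ?_, ?_⟩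
    · intro v hv
      rcases eq_or_ne v a with rfl | hva
      · simpa using hk
      · simpa [hva] using hlt v ((mem_insert.mp hv).resolve_left hva)
    · intro u hu v hv huv
      have hu' := mem_insert.mp hu
      have hv' := mem_insert.mp hv
      rcases eq_or_ne u a with rfl | hua <;> rcases eq_or_ne v u with rfl | hvu
      · exact absurd huv (G.loopless.irrefl _)
      · simpa [hvu] using (hkne v (hv'.resolve_left hvu) huv.symm).symm
      · exact absurd huv (G.loopless.irrefl _)
      · rcases eq_or_ne v a with rfl | hva
        · simpa [hua] using hkne u (hu'.resolve_left hua) huv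
        · simpa [hua, hva] using hc u (hu'.resolve_left hua) v (hv'.resolve_left hva) huv

def fiberwise (G : SimpleGraph V) {α : Type*} (s : V → α) : SimpleGraph V where
  Adj u v := G.Adj u v ∧ s u = s v
  symm := ⟨fun _ _ h => ⟨h.1.symm, h.2.symm⟩⟩
  loopless := ⟨fun v h => G.loopless.irrefl v h.1⟩

@[simp]
theorem fiberwise_adj {α : Type*} {s : V → α} {u v : V} :
    (G.fiberwise s).Adj u v ↔ G.Adj u v ∧ s u = s v :=
  Iff.rfl

theorem fiberwise_le {α : Type*} (s : V → α) : G.fiberwise s ≤ G :=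
  fun _ _ h => (fiberwise_adj.mp h).1

theorem Colorable.of_fiberwise {α : Type*} {s : V → α} {S : Finset α} (hs : ∀ v, s v ∈ S) {k : ℕ}
    (h : (G.fiberwise s).Colorable k) : G.Colorable (#S * k) := by
  obtain ⟨C⟩ := h
  let C' : G.Coloring (S × Fin k) := Coloring.mk (fun v => (⟨s v, hs v⟩, C v)) fun huv hc =>
    C.valid (fiberwise_adj.mpr ⟨huv, congrArg Subtype.val (Prod.ext_iff.mp hc).1⟩)
      (Prod.ext_iff.mp hc).2
  simpa using C'.colorable

end SimpleGraph

/-- `(p, q)` is a segment representation of `G`: each vertex `v` is the segment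
from `p v` to `q v`, and distinct vertices are adjacent iff their segments meet. -/
def IsSegmentRepresentation {V : Type*} (G : SimpleGraph V) (p q : V → ℝ × ℝ) : Prop :=
  (∀ v, p v ≠ q v) ∧
    ∀ u v, G.Adj u v ↔ u ≠ v ∧ (segment ℝ (p u) (q u) ∩ segment ℝ (p v) (q v)).Nonempty

theorem IsSegmentRepresentation.isClique_fiberwise {V : Type*} {G : SimpleGraph V}
    {p q : V → ℝ × ℝ} (hrep : IsSegmentRepresentation G p q) (v : V) :
    (G.fiberwise fun v => segSlope (p v) (q v)).IsClique
      {u | segStart (p u) (q u) ≤ segStart (p v) (q v) ∧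
        (G.fiberwise fun v => segSlope (p v) (q v)).Adj u v} := by
  intro u hu w hw huw
  obtain ⟨hu_le, hu_adj, hu_slope⟩ := hu
  obtain ⟨hw_le, hw_adj, hw_slope⟩ := hw
  obtain ⟨hu_off, hu_mem⟩ := segOffset_eq_and_segStart_mem_segInterval hu_slope
    ((hrep.2 u v).mp hu_adj).2 hu_le
  obtain ⟨hw_off, hw_mem⟩ := segOffset_eq_and_segStart_mem_segInterval hw_slope
    ((hrep.2 w v).mp hw_adj).2 hw_le
  have hslope := hu_slope.trans hw_slope.symm
  refine SimpleGraph.fiberwise_adj.mpr ⟨(hrep.2 u w).mpr ⟨huw, ?_⟩, hslope⟩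
  exact (segment_inter_nonempty_iff_of_segSlope_eq hslope).mpr
    ⟨hu_off.trans hw_off.symm, _, hu_mem, hw_mem⟩

theorem dDIR_chromaticNumber_le_general {V : Type*} [Fintype V]
    (G : SimpleGraph V) (d : ℕ) (p q : V → ℝ × ℝ)
    (hrep : IsSegmentRepresentation G p q)
    (hslopes : (Finset.univ.image fun v => segSlope (p v) (q v)).card ≤ d) :
    G.chromaticNumber ≤ (d * G.cliqueNum : ℕ∞) := by
  set slope : V → Option ℝ := fun v => segSlope (p v) (q v)
  have hfiber : (G.fiberwise slope).Colorable G.cliqueNum :=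
    (SimpleGraph.colorable_cliqueNum_of_forall_isClique_adj_le _ hrep.isClique_fiberwise).mono
      (SimpleGraph.cliqueNum_mono (SimpleGraph.fiberwise_le slope))
  have hG := hfiber.of_fiberwise fun v => Finset.mem_image_of_mem slope (Finset.mem_univ v)
  exact_mod_cast (hG.mono (Nat.mul_le_mul_right _ hslopes)).chromaticNumber_le

/-- every `d`-DIR graph (segment graph with at most `d` slopes)
satisfies `χ(G) ≤ d·ω(G)`. -/
theorem dDIR_chromaticNumber_le {V : Type*} [Fintype V] [DecidableEq V]
    (G : SimpleGraph V) (d : ℕ) (p q : V → ℝ × ℝ)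
    (hrep : IsSegmentRepresentation G p q)
    (hslopes : (Finset.univ.image fun v => segSlope (p v) (q v)).card ≤ d) :
    G.chromaticNumber ≤ (d * G.cliqueNum : ℕ∞) :=
  dDIR_chromaticNumber_le_general G d p q hrep hslopes
end

section
/- Let (I_u) be a family of segments in ℝ² with d slopes defining a graph G with odd clique number ω. If u and v are intersecting segments of distinct slopes such that neither u nor v is ω-uncovered within its own slope class (i.e. every point of I_u lies in at least (ω+1)/2 segments of u's slope class, and similarly for v), then G contains a clique of size ω+1. -/
open scoped Classical in
/-- in a segment representation with odd clique number `ω`, if two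
intersecting segments of distinct slopes are both covered within their own slope
class (every point of the segment lies on at least `(ω+1)/2` segments of its
slope class), then the graph contains a clique of size `ω + 1`. -/
theorem clique_of_two_covered_segments {V : Type*} [Fintype V]
    (G : SimpleGraph V) (p q : V → ℝ × ℝ)
    (hrep : IsSegmentRepresentation G p q)
    (ω : ℕ) (hω : G.cliqueNum = ω) (hodd : Odd ω)
    (u v : V) (huv : G.Adj u v)
    (hslope : segSlope (p u) (q u) ≠ segSlope (p v) (q v))
    (hu : ∀ x ∈ segment ℝ (p u) (q u),
      (ω + 1) / 2 ≤ (Finset.univ.filter fun w =>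
        segSlope (p w) (q w) = segSlope (p u) (q u) ∧ x ∈ segment ℝ (p w) (q w)).card)
    (hv : ∀ x ∈ segment ℝ (p v) (q v),
      (ω + 1) / 2 ≤ (Finset.univ.filter fun w =>
        segSlope (p w) (q w) = segSlope (p v) (q v) ∧ x ∈ segment ℝ (p w) (q w)).card) :
    ¬ G.CliqueFree (ω + 1) := by
  obtain ⟨hne, hadj⟩ := hrep
  obtain ⟨hneuv, x, hxu, hxv⟩ := (hadj u v).mp huv
  set Su := Finset.univ.filter fun w =>
    segSlope (p w) (q w) = segSlope (p u) (q u) ∧ x ∈ segment ℝ (p w) (q w) with hSu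
  set Sv := Finset.univ.filter fun w =>
    segSlope (p w) (q w) = segSlope (p v) (q v) ∧ x ∈ segment ℝ (p w) (q w) with hSv
  have hdisj : Disjoint Su Sv := by
    rw [Finset.disjoint_left]
    intro w hw hw'
    simp only [hSu, hSv, Finset.mem_filter] at hw hw'
    exact hslope (hw.2.1 ▸ hw'.2.1 ▸ rfl)
  have hmemx : ∀ w ∈ Su ∪ Sv, x ∈ segment ℝ (p w) (q w) := by
    intro w hw
    rcases Finset.mem_union.mp hw with h | h <;>
      simpa [hSu, hSv, Finset.mem_filter] using (Finset.mem_filter.mp h).2.2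
  have hclique : G.IsClique (↑(Su ∪ Sv) : Set V) := by
    intro a ha b hb hab
    exact (hadj a b).mpr ⟨hab, x, hmemx a ha, hmemx b hb⟩
  obtain ⟨k, hk⟩ := hodd
  have hcard : ω + 1 ≤ (Su ∪ Sv).card := by
    rw [Finset.card_union_of_disjoint hdisj]
    have h1 := hu x hxu
    have h2 := hv x hxv
    rw [← hSu] at h1
    rw [← hSv] at h2
    omega
  obtain ⟨t, hts, htcard⟩ := Finset.exists_subset_card_eq hcard
  intro hfree
  exact hfree t ⟨hclique.subset (by exact_mod_cast hts), htcard⟩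
end

section
/- Let G be a graph with a proper k-colouring φ, and suppose V(G) is partitioned into 2d independent-set classes paired as (V^{1,1},V^{1,2}),…,(V^{d,1},V^{d,2}). Define ψ on each vertex v by appending to {φ-colour} a new label depending on its class as in the Kostochka–Nešetřil blowup argument. If G is obtained from a graph H by blowing up vertices in classes other than V^{d,2} into t copies and vertices of V^{d,2} into t+1 copies, and H requires at least 2(t+1)d colours in any (t+1)-fold colouring, then k ≥ 2td + 1. -/
/-!
The copies of a vertex `v` of `H` carry `n v` distinct colours of `φ`, disjoint from the colours
on the copies of any neighbour of `v`. Giving every vertex outside the class `(d - 1, 1)` one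
extra colour `k + i`, where `i < 2d - 1` indexes its class, yields a `(t + 1)`-fold colouring of
`H` with at most `k + 2d - 1` colours, so `2(t + 1)d ≤ k + 2d - 1`.
-/

/-- The blowup of `H` with `n v` copies of each vertex `v`: the copies of a vertex
form a clique, and all copies of adjacent vertices are adjacent. -/
def mixedBlowup {V : Type*} (H : SimpleGraph V) (n : V → ℕ) :
    SimpleGraph (Σ v : V, Fin (n v)) where
  Adj x y := H.Adj x.1 y.1 ∨ (x.1 = y.1 ∧ x ≠ y)
  symm := by
    constructor
    rintro x y (h | ⟨h1, h2⟩)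
    · exact Or.inl h.symm
    · exact Or.inr ⟨h1.symm, h2.symm⟩
  loopless := by constructor; rintro x (h | ⟨_, h2⟩); exacts [H.loopless.irrefl _ h, h2 rfl]

open Finset

section BlowupColours

variable {V : Type*} {H : SimpleGraph V} {n : V → ℕ} {k : ℕ}

def blowupColours (φ : (Σ v : V, Fin (n v)) → Fin k) (v : V) : Finset ℕ :=
  univ.image fun i : Fin (n v) => (φ ⟨v, i⟩ : ℕ)

theorem lt_of_mem_blowupColours {φ : (Σ v : V, Fin (n v)) → Fin k} {v : V} {x : ℕ}
    (hx : x ∈ blowupColours φ v) : x < k := by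
  obtain ⟨i, -, rfl⟩ := mem_image.mp hx
  exact (φ ⟨v, i⟩).2

theorem card_blowupColours {φ : (Σ v : V, Fin (n v)) → Fin k}
    (hφ : ∀ x y, (mixedBlowup H n).Adj x y → φ x ≠ φ y) (v : V) :
    (blowupColours φ v).card = n v := by
  rw [blowupColours, card_image_of_injective, card_univ, Fintype.card_fin]
  intro i j hij
  by_contra hne
  exact hφ ⟨v, i⟩ ⟨v, j⟩ (Or.inr ⟨rfl, by simpa using hne⟩) (Fin.ext hij)

theorem disjoint_blowupColours {φ : (Σ v : V, Fin (n v)) → Fin k}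
    (hφ : ∀ x y, (mixedBlowup H n).Adj x y → φ x ≠ φ y) {u v : V} (huv : H.Adj u v) :
    Disjoint (blowupColours φ u) (blowupColours φ v) := by
  rw [disjoint_left]
  rintro _ hu hv
  obtain ⟨i, -, rfl⟩ := mem_image.mp hu
  obtain ⟨j, -, hj⟩ := mem_image.mp hv
  exact hφ ⟨u, i⟩ ⟨v, j⟩ (Or.inl huv) (Fin.ext hj.symm)

end BlowupColours

section PadColours

variable {V : Type*} (S : V → Finset ℕ) (k : ℕ) (cls : V → ℕ) (s : ℕ)

def padColours (v : V) : Finset ℕ :=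
  if cls v = s then S v else insert (k + cls v) (S v)

variable {S k cls s}

theorem card_padColours {v : V} (hS : ∀ x ∈ S v, x < k) :
    (padColours S k cls s v).card = (S v).card + if cls v = s then 0 else 1 := by
  unfold padColours
  split_ifs
  · rfl
  · exact card_insert_of_notMem fun h => by have := hS _ h; omega

theorem mem_padColours {v : V} {x : ℕ} :
    x ∈ padColours S k cls s v ↔ x ∈ S v ∨ (cls v ≠ s ∧ x = k + cls v) := by
  unfold padColours
  split_ifs <;> simp [*, or_comm]

theorem disjoint_padColours {u v : V} (hu : ∀ x ∈ S u, x < k) (hv : ∀ x ∈ S v, x < k)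
    (hcls : cls u ≠ cls v) (hdisj : Disjoint (S u) (S v)) :
    Disjoint (padColours S k cls s u) (padColours S k cls s v) := by
  rw [disjoint_left]
  intro x hxu hxv
  rcases mem_padColours.mp hxu with hxu | ⟨-, rfl⟩ <;>
    rcases mem_padColours.mp hxv with hxv | ⟨-, hxv⟩
  · exact disjoint_left.mp hdisj hxu hxv
  · have := hu _ hxu; omega
  · have := hv _ hxv; omega
  · omega

theorem biUnion_padColours_subset [Fintype V] {m : ℕ} (hS : ∀ v, ∀ x ∈ S v, x < k)
    (hcls : ∀ v, cls v ≠ s → cls v < m) :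
    univ.biUnion (padColours S k cls s) ⊆ range (k + m) := by
  intro x hx
  obtain ⟨v, -, hxv⟩ := mem_biUnion.mp hx
  rw [mem_range]
  rcases mem_padColours.mp hxv with hx | ⟨hv, rfl⟩
  · have := hS v x hx; omega
  · have := hcls v hv; omega

end PadColours

/-- Kostochka–Nešetřil-style blowup argument. If `V(H)` is
partitioned into `2d` independent classes, `G` is the blowup of `H` with `t+1`
copies on the class `(d−1, 1)` and `t` copies elsewhere, and every `(t+1)`-fold
colouring of `H` uses at least `2(t+1)d` colours, then any proper `k`-colouring
of the blowup has `k ≥ 2td + 1`. -/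
theorem blowup_coloring_lower_bound {V : Type*} [Fintype V]
    (H : SimpleGraph V) (d t k : ℕ) (hd : 0 < d)
    (c : V → Fin d × Fin 2)
    (hindep : ∀ u v, H.Adj u v → c u ≠ c v)
    (n : V → ℕ)
    (hn : ∀ v, n v = if c v = (⟨d - 1, by omega⟩, 1) then t + 1 else t)
    (hH : ∀ ψ : V → Finset ℕ, (∀ v, (ψ v).card = t + 1) →
      (∀ u v, H.Adj u v → Disjoint (ψ u) (ψ v)) →
      2 * (t + 1) * d ≤ (Finset.univ.biUnion ψ).card)
    (φ : (Σ v : V, Fin (n v)) → Fin k)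
    (hφ : ∀ x y, (mixedBlowup H n).Adj x y → φ x ≠ φ y) :
    2 * t * d + 1 ≤ k := by
  classical
  -- the special class `(d - 1, 1)` is the last one, `2d - 1`, in this enumeration
  let cls : V → ℕ := fun v => finProdFinEquiv (c v)
  have hspecial : ∀ v, cls v = 2 * d - 1 ↔ c v = (⟨d - 1, by omega⟩, 1) := fun v => by
    rw [← finProdFinEquiv.injective.eq_iff, Fin.ext_iff]
    simp only [cls, finProdFinEquiv_apply_val]
    omega
  let ψ := padColours (blowupColours φ) k cls (2 * d - 1)
  have hψ_card : ∀ v, (ψ v).card = t + 1 := fun v => by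
    rw [card_padColours fun _ => lt_of_mem_blowupColours, card_blowupColours hφ, hn v]
    simp only [hspecial]
    split_ifs <;> rfl
  have hψ_disj : ∀ u v, H.Adj u v → Disjoint (ψ u) (ψ v) := fun u v huv =>
    disjoint_padColours (fun _ => lt_of_mem_blowupColours) (fun _ => lt_of_mem_blowupColours)
      (fun h => hindep u v huv (finProdFinEquiv.injective (Fin.ext h)))
      (disjoint_blowupColours hφ huv)
  have hψ_sub : univ.biUnion ψ ⊆ range (k + (2 * d - 1)) :=
    biUnion_padColours_subset (fun _ _ => lt_of_mem_blowupColours)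
      fun v hv => by have := (finProdFinEquiv (c v)).2; simp only [cls] at hv ⊢; omega
  have hle := (hH ψ hψ_card hψ_disj).trans ((card_le_card hψ_sub).trans_eq (card_range _))
  have hexpand : 2 * (t + 1) * d = 2 * t * d + 2 * d := by ring
  omega
end

section
/- Let S be a segment crossing a rectangle R₁ vertically, and let R₂ be a rectangle crossed horizontally by R₁ (i.e. the top and bottom sides of R₂ cross R₁). Then S intersects R₂. -/
open Set

/-- Sides of the rectangle `[a,c] × [b,d]`. -/
def topSide (a c b d : ℝ) : Set (ℝ × ℝ) := Icc a c ×ˢ {d}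
def botSide (a c b d : ℝ) : Set (ℝ × ℝ) := Icc a c ×ˢ {b}
def leftSide (a c b d : ℝ) : Set (ℝ × ℝ) := {a} ×ˢ Icc b d
def rightSide (a c b d : ℝ) : Set (ℝ × ℝ) := {c} ×ˢ Icc b d

/-- A set crosses the rectangle `[a,c] × [b,d]` vertically if it meets both
horizontal sides. -/
def CrossesVertically (S : Set (ℝ × ℝ)) (a c b d : ℝ) : Prop :=
  (S ∩ topSide a c b d).Nonempty ∧ (S ∩ botSide a c b d).Nonempty

/-- A set crosses the rectangle `[a,c] × [b,d]` horizontally if it meets both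
vertical sides. -/
def CrossesHorizontally (S : Set (ℝ × ℝ)) (a c b d : ℝ) : Prop :=
  (S ∩ leftSide a c b d).Nonempty ∧ (S ∩ rightSide a c b d).Nonempty

/-!
The top side of `R₂` is a horizontal segment crossing `R₁` horizontally, and it lies in `R₂`.
A segment running from the bottom side of `R₁` to its top side passes, by convexity, through
every height of `R₁` while staying within the vertical strip of `R₁`; at the height of the top
side of `R₂` it therefore meets that side.
-/

lemma exists_mem_segment_snd_eq {p q : ℝ × ℝ} {y : ℝ} (hy : y ∈ uIcc p.2 q.2) :
    ∃ z ∈ segment ℝ p q, z.2 = y := by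
  rw [← segment_eq_uIcc] at hy
  exact (image_segment ℝ (LinearMap.snd ℝ ℝ ℝ).toAffineMap p q).ge hy

lemma crossesHorizontally_horizontal_iff {u v y a c b d : ℝ} :
    CrossesHorizontally (Icc u v ×ˢ {y}) a c b d ↔
      a ∈ Icc u v ∧ c ∈ Icc u v ∧ y ∈ Icc b d := by
  simp only [CrossesHorizontally, leftSide, rightSide, prod_inter_prod, prod_nonempty_iff,
    inter_singleton_nonempty, singleton_inter_nonempty]
  tauto

theorem CrossesVertically.segment_inter_horizontal_nonempty {P Q : ℝ × ℝ} {a c b d u v y : ℝ}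
    (hS : CrossesVertically (segment ℝ P Q) a c b d)
    (hH : CrossesHorizontally (Icc u v ×ˢ {y}) a c b d) :
    (segment ℝ P Q ∩ Icc u v ×ˢ {y}).Nonempty := by
  obtain ⟨⟨T, hTS, hTx, hTy⟩, ⟨B, hBS, hBx, hBy⟩⟩ := hS
  obtain ⟨ha, hc, hy⟩ := crossesHorizontally_horizontal_iff.1 hH
  have hy' : y ∈ uIcc B.2 T.2 := by
    rw [mem_singleton_iff.1 hBy, mem_singleton_iff.1 hTy]
    exact Icc_subset_uIcc hy
  obtain ⟨z, hz, rfl⟩ := exists_mem_segment_snd_eq hy'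
  have hz_strip : z ∈ Icc a c ×ˢ (univ : Set ℝ) :=
    ((convex_Icc a c).prod convex_univ).segment_subset ⟨hBx, trivial⟩ ⟨hTx, trivial⟩ hz
  exact ⟨z, (convex_segment P Q).segment_subset hBS hTS hz,
    Icc_subset_Icc ha.1 hc.2 hz_strip.1, rfl⟩

lemma topSide_subset_Icc_prod_Icc {a c b d : ℝ} (hbd : b ≤ d) :
    topSide a c b d ⊆ Icc a c ×ˢ Icc b d :=
  prod_mono subset_rfl <| singleton_subset_iff.2 <| right_mem_Icc.2 hbd

theorem segment_meets_crossing_rectangle_general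
    (P Q : ℝ × ℝ) (a₁ c₁ b₁ d₁ a₂ c₂ b₂ d₂ : ℝ)
    (hR₂ : a₂ < c₂ ∧ b₂ < d₂)
    (hS : CrossesVertically (segment ℝ P Q) a₁ c₁ b₁ d₁)
    (htop : CrossesHorizontally (topSide a₂ c₂ b₂ d₂) a₁ c₁ b₁ d₁) :
    (segment ℝ P Q ∩ Icc a₂ c₂ ×ˢ Icc b₂ d₂).Nonempty :=
  (hS.segment_inter_horizontal_nonempty htop).mono <|
    inter_subset_inter_right _ <| topSide_subset_Icc_prod_Icc hR₂.2.le

/-- a segment `S` crossing a rectangle `R₁` vertically intersects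
every rectangle `R₂` that crosses `R₁` horizontally (i.e. whose top and bottom
sides cross `R₁` horizontally). -/
theorem segment_meets_crossing_rectangle
    (P Q : ℝ × ℝ) (a₁ c₁ b₁ d₁ a₂ c₂ b₂ d₂ : ℝ)
    (hR₁ : a₁ < c₁ ∧ b₁ < d₁) (hR₂ : a₂ < c₂ ∧ b₂ < d₂)
    (hS : CrossesVertically (segment ℝ P Q) a₁ c₁ b₁ d₁)
    (htop : CrossesHorizontally (topSide a₂ c₂ b₂ d₂) a₁ c₁ b₁ d₁)
    (hbot : CrossesHorizontally (botSide a₂ c₂ b₂ d₂) a₁ c₁ b₁ d₁) :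
    (segment ℝ P Q ∩ Icc a₂ c₂ ×ˢ Icc b₂ d₂).Nonempty :=
  segment_meets_crossing_rectangle_general P Q a₁ c₁ b₁ d₁ a₂ c₂ b₂ d₂ hR₂ hS htop
end
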